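/- For real x with 0 < x < 1, real c > 0 and T > 0, the absolute value of (1/(2πi)) ∫_{c-iT}^{c+iT} x^s/s ds is at most a constant times x^c/(T·|log x|). -/

import Mathlib

/-!
For `0 < x < 1` the kernel `x ^ s / s` is holomorphic on `Re s > 0` and decays like `x ^ (Re s)`
as `Re s → ∞`. Cauchy's theorem on the rectangle with vertices `c ± iT`, `σ ± iT` expresses the
integral over `[c - iT, c + iT]` through the two horizontal edges and the edge `[σ - iT, σ + iT]`.
On the horizontal edges `|s| ≥ T`, so each contributes at most
`(∫_c^∞ x^u du) / T = x^c / (T |log x|)`, while the far vertical integral is `O(T x^σ / σ)` and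
vanishes as `σ → ∞`.
-/

open Complex Filter Topology intervalIntegral

noncomputable def perronKernel (x : ℝ) (s : ℂ) : ℂ := (x : ℂ) ^ s / s

variable {x : ℝ}

lemma norm_perronKernel_add_mul_I (hx : 0 < x) (u y : ℝ) :
    ‖perronKernel x (u + y * I)‖ = x ^ u / ‖(u + y * I : ℂ)‖ := by
  rw [perronKernel, norm_div, norm_cpow_eq_rpow_re_of_pos hx, add_re, ofReal_re, re_ofReal_mul,
    I_re, mul_zero, add_zero]

lemma differentiableAt_perronKernel (hx : 0 < x) {s : ℂ} (hs : s ≠ 0) :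
    DifferentiableAt ℂ (perronKernel x) s :=
  (differentiableAt_id.const_cpow (Or.inl (ofReal_ne_zero.mpr hx.ne'))).div differentiableAt_id hs

lemma integral_rpow_le_of_lt_one (hx0 : 0 < x) (hx1 : x < 1) (a b : ℝ) :
    ∫ u in a..b, x ^ u ≤ x ^ a / |Real.log x| := by
  have hlog : Real.log x < 0 := Real.log_neg hx0 hx1
  have hderiv : ∀ u ∈ Set.uIcc a b, HasDerivAt (fun u => x ^ u / Real.log x) (x ^ u) u := by
    intro u _
    simpa [hlog.ne] using
      (Real.hasStrictDerivAt_const_rpow hx0 u).hasDerivAt.div_const (Real.log x)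
  have hint : IntervalIntegrable (fun u => x ^ u) MeasureTheory.volume a b :=
    (Real.continuous_const_rpow hx0.ne').intervalIntegrable a b
  rw [integral_eq_sub_of_hasDerivAt hderiv hint, abs_of_neg hlog, ← sub_div, ← neg_div_neg_eq,
    neg_sub]
  exact div_le_div_of_nonneg_right (by linarith [Real.rpow_nonneg hx0.le b]) (by linarith)

lemma norm_integral_perronKernel_horizontal_le (hx0 : 0 < x) (hx1 : x < 1) {a b y : ℝ}
    (hab : a ≤ b) (hy : y ≠ 0) :
    ‖∫ u in a..b, perronKernel x (u + y * I)‖ ≤ x ^ a / (|y| * |Real.log x|) := by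
  have hbound : ∀ u : ℝ, ‖perronKernel x (u + y * I)‖ ≤ x ^ u / |y| := fun u => by
    rw [norm_perronKernel_add_mul_I hx0]
    refine div_le_div_of_nonneg_left (Real.rpow_nonneg hx0.le _) (abs_pos.mpr hy) ?_
    simpa using abs_im_le_norm (u + y * I)
  have hint : IntervalIntegrable (fun u => x ^ u / |y|) MeasureTheory.volume a b :=
    ((Real.continuous_const_rpow hx0.ne').div_const _).intervalIntegrable a b
  calc ‖∫ u in a..b, perronKernel x (u + y * I)‖
      ≤ ∫ u in a..b, x ^ u / |y| :=
        norm_integral_le_of_norm_le hab (.of_forall fun u _ => hbound u) hint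
    _ = (∫ u in a..b, x ^ u) / |y| := integral_div _ _
    _ ≤ x ^ a / |Real.log x| / |y| := by
        gcongr
        exact integral_rpow_le_of_lt_one hx0 hx1 a b
    _ = x ^ a / (|y| * |Real.log x|) := by rw [div_div, mul_comm]

lemma tendsto_integral_perronKernel_vertical_atTop (hx0 : 0 < x) (hx1 : x < 1) (T : ℝ) :
    Tendsto (fun σ : ℝ => ∫ t in (-T)..T, perronKernel x (σ + t * I)) atTop (𝓝 0) := by
  have hbound : ∀ σ : ℝ, 0 < σ →
      ‖∫ t in (-T)..T, perronKernel x (σ + t * I)‖ ≤ x ^ σ / σ * |T - -T| :=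
    fun σ hσ => norm_integral_le_of_norm_le_const fun t _ => by
      rw [norm_perronKernel_add_mul_I hx0]
      refine div_le_div_of_nonneg_left (Real.rpow_nonneg hx0.le _) hσ ?_
      simpa using re_le_norm (σ + t * I)
  refine squeeze_zero_norm' ((eventually_gt_atTop 0).mono hbound) ?_
  simpa [div_eq_mul_inv] using ((tendsto_rpow_atTop_of_base_lt_one x (by linarith) hx1).mul
    tendsto_inv_atTop_zero).mul_const |T - -T|

lemma I_smul_integral_perronKernel_vertical_eq (hx : 0 < x) {c σ : ℝ} (hc : 0 < c)
    (hcσ : c ≤ σ) (T : ℝ) :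
    I • ∫ t in (-T)..T, perronKernel x (c + t * I) =
      (∫ u in c..σ, perronKernel x (u + (-T : ℝ) * I)) -
        (∫ u in c..σ, perronKernel x (u + T * I)) +
          I • ∫ t in (-T)..T, perronKernel x (σ + t * I) := by
  have hdiff : DifferentiableOn ℂ (perronKernel x) (Set.uIcc c σ ×ℂ Set.uIcc (-T) T) := by
    rintro s ⟨hre, -⟩
    have hs : s ≠ 0 := fun h => by
      rw [Set.mem_preimage, Set.uIcc_of_le hcσ, h, zero_re] at hre
      exact hc.not_ge hre.1
    exact (differentiableAt_perronKernel hx hs).differentiableWithinAt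
  exact (sub_eq_zero.mp <|
    integral_boundary_rect_eq_zero_of_differentiableOn (perronKernel x) ⟨c, -T⟩ ⟨σ, T⟩ hdiff).symm

lemma norm_integral_perronKernel_vertical_le (hx0 : 0 < x) (hx1 : x < 1) {c T : ℝ} (hc : 0 < c)
    (hT : T ≠ 0) :
    ‖∫ t in (-T)..T, perronKernel x (c + t * I)‖ ≤ 2 * (x ^ c / (|T| * |Real.log x|)) := by
  set L := x ^ c / (|T| * |Real.log x|)
  set V := fun σ : ℝ => ∫ t in (-T)..T, perronKernel x (σ + t * I)
  have hV : Tendsto (fun σ => 2 * L + ‖V σ‖) atTop (𝓝 (2 * L)) := by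
    simpa using ((tendsto_integral_perronKernel_vertical_atTop hx0 hx1 T).norm.const_add (2 * L))
  refine ge_of_tendsto hV ((eventually_ge_atTop c).mono fun σ hcσ => ?_)
  have hbottom := norm_integral_perronKernel_horizontal_le hx0 hx1 hcσ (neg_ne_zero.mpr hT)
  have htop := norm_integral_perronKernel_horizontal_le hx0 hx1 hcσ hT
  rw [abs_neg] at hbottom
  calc ‖V c‖ = ‖I • V c‖ := by rw [norm_smul, norm_I, one_mul]
    _ = ‖(∫ u in c..σ, perronKernel x (u + (-T : ℝ) * I)) -
          (∫ u in c..σ, perronKernel x (u + T * I)) + I • V σ‖ := by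
        rw [I_smul_integral_perronKernel_vertical_eq hx0 hc hcσ T]
    _ ≤ L + L + ‖V σ‖ := by
        refine (norm_add_le _ _).trans
          (add_le_add ((norm_sub_le _ _).trans (add_le_add hbottom htop)) ?_)
        rw [norm_smul, norm_I, one_mul]
    _ = 2 * L + ‖V σ‖ := by ring

theorem truncated_perron_lt_one :
    ∃ C : ℝ, 0 < C ∧ ∀ x c T : ℝ, 0 < x → x < 1 → 0 < c → 0 < T →
      ‖((1 / (2 * Real.pi)) *
            ∫ t in (-T)..T, (x : ℂ) ^ ((c : ℂ) + t * Complex.I) / ((c : ℂ) + t * Complex.I))‖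
        ≤ C * x ^ c / (T * |Real.log x|) := by
  refine ⟨1 / Real.pi, by positivity, fun x c T hx0 hx1 hc hT => ?_⟩
  have hbound := norm_integral_perronKernel_vertical_le hx0 hx1 hc hT.ne'
  rw [abs_of_pos hT] at hbound
  have hfactor : ‖(1 / (2 * Real.pi) : ℂ)‖ = 1 / (2 * Real.pi) := by
    simp [abs_of_pos Real.pi_pos]
  calc _ = 1 / (2 * Real.pi) * ‖∫ t in (-T)..T, perronKernel x (c + t * I)‖ := by
        rw [norm_mul, hfactor]; rfl
    _ ≤ 1 / (2 * Real.pi) * (2 * (x ^ c / (T * |Real.log x|))) := by gcongr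
    _ = 1 / Real.pi * x ^ c / (T * |Real.log x|) := by field_simp
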